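/- arXiv:1405.1946 — 2 statements merged into one kernel-verified Lean document; each statement's English description precedes it below -/
import Mathlib

section
/- Let G be a finite group, N a soluble normal subgroup of G, and x ∈ F*(G) an element of the generalized Fitting subgroup of G. Then x lies in the Fitting subgroup of the group N⟨x⟩, i.e., x ∈ F(N⟨x⟩). -/
universe u v

/-- A subgroup `H` of `G` is *subnormal* if there is a chain of subgroups
`H = C_0 ≤ C_1 ≤ … ≤ C_n = G` with each `C_i` normal in `C_{i+1}`. -/
def IsSubnormal {G : Type*} [Group G] (H : Subgroup G) : Prop :=
  ∃ (n : ℕ) (c : ℕ → Subgroup G), c 0 = H ∧ c n = ⊤ ∧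
    ∀ i, i < n → c i ≤ c (i + 1) ∧ ((c i).subgroupOf (c (i + 1))).Normal

/-- A magma is nonabelian if some two elements do not commute. -/
def IsNonabelian (X : Type*) [Mul X] : Prop := ∃ a b : X, a * b ≠ b * a

/-- A group is quasisimple if it is perfect and its central quotient is a
nonabelian simple group. -/
def IsQuasisimple (Q : Type*) [Group Q] : Prop :=
  commutator Q = ⊤ ∧ IsSimpleGroup (Q ⧸ Subgroup.center Q) ∧
    IsNonabelian (Q ⧸ Subgroup.center Q)

/-- The Fitting subgroup of a group: the subgroup generated by (for a finite group,
the product of) all nilpotent normal subgroups. -/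
def fittingSubgroup (G : Type*) [Group G] : Subgroup G :=
  sSup {H : Subgroup G | H.Normal ∧ Group.IsNilpotent H}

/-- The generalized Fitting subgroup `F*(G)`: the product of the Fitting subgroup
and all subnormal quasisimple subgroups.  (The generating set below is closed under
conjugation, so its normal closure coincides with the subgroup it generates.) -/
def genFitting (G : Type*) [Group G] : Subgroup G :=
  Subgroup.normalClosure
    ((fittingSubgroup G : Set G) ∪
      {x | ∃ Q : Subgroup G, IsSubnormal Q ∧ IsQuasisimple ↥Q ∧ x ∈ Q})

instance genFitting_normal (G : Type*) [Group G] : (genFitting G).Normal :=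
  Subgroup.normalClosure_normal

/-- The soluble radical of a group: the subgroup generated by (for a finite group,
the largest of) all soluble normal subgroups. -/
def solubleRadical (G : Type*) [Group G] : Subgroup G :=
  Subgroup.normalClosure {x | ∃ H : Subgroup G, H.Normal ∧ IsSolvable ↥H ∧ x ∈ H}

instance solubleRadical_normal (G : Type*) [Group G] : (solubleRadical G).Normal :=
  Subgroup.normalClosure_normal

/-- The generalized Fitting series, bundled with the proof of normality of its terms:
`F*_0(G) = ⊥` and `F*_{n+1}(G)` is the full preimage in `G` of `F*(G/F*_n(G))`. -/
def genFittingSeriesAux (G : Type u) [Group G] : ℕ → {H : Subgroup G // H.Normal}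
  | 0 => ⟨⊥, inferInstance⟩
  | n + 1 =>
    let P := genFittingSeriesAux G n
    haveI := P.2
    ⟨(genFitting (G ⧸ P.1)).comap (QuotientGroup.mk' P.1),
      Subgroup.Normal.comap inferInstance _⟩

/-- The generalized Fitting series of `G`: `F*_1(G) = F*(G)` and `F*_{n+1}(G)` is the
full preimage in `G` of `F*(G/F*_n(G))`. -/
def genFittingSeries (G : Type u) [Group G] (n : ℕ) : Subgroup G :=
  (genFittingSeriesAux G n).1

instance genFittingSeries_normal (G : Type u) [Group G] (n : ℕ) :
    (genFittingSeries G n).Normal :=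
  (genFittingSeriesAux G n).2

/-- The generalized Fitting height `h*(G)`: the least `h` with `F*_h(G) = G`. -/
noncomputable def genFittingHeight (G : Type u) [Group G] : ℕ :=
  sInf {h : ℕ | genFittingSeries G h = ⊤}

/-- The fixed-point subgroup `C_G(φ)` of an automorphism `φ` of `G`. -/
def autFixedSubgroup {G : Type*} [Group G] (φ : G ≃* G) : Subgroup G where
  carrier := {g | φ g = g}
  one_mem' := map_one φ
  mul_mem' := fun {a b} ha hb => by
    simp only [Set.mem_setOf_eq] at *; rw [map_mul, ha, hb]
  inv_mem' := fun {a} ha => by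
    simp only [Set.mem_setOf_eq] at *; rw [map_inv, ha]

/-- The fixed-point subgroup `C_G(A)` of a group `A` acting on `G` by automorphisms
via `ρ : A →* MulAut G`. -/
def actionFixedSubgroup {A G : Type*} [Group A] [Group G] (ρ : A →* MulAut G) :
    Subgroup G where
  carrier := {g | ∀ a : A, ρ a g = g}
  one_mem' := fun a => map_one (ρ a)
  mul_mem' := fun {x y} hx hy a => by
    rw [map_mul, hx a, hy a]
  inv_mem' := fun {x} hx a => by
    rw [map_inv, hx a]

/-- The subgroup `[G, φ]` generated by all `g⁻¹ * φ(g)`. -/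
def autCommutator {G : Type*} [Group G] (φ : G ≃* G) : Subgroup G :=
  Subgroup.closure {x | ∃ g : G, x = g⁻¹ * φ g}

/-- `X` is a (nonempty) direct product of nonabelian simple groups. -/
def IsNonabelianSimpleProduct (X : Type*) [Group X] : Prop :=
  ∃ (ι : Type) (f : ι → Type) (inst : ∀ i : ι, Group (f i)),
    Nonempty ι ∧
    (∀ i : ι, letI := inst i
      IsSimpleGroup (f i) ∧ IsNonabelian (f i)) ∧
    (letI : ∀ i : ι, Group (f i) := inst
     Nonempty (X ≃* ∀ i : ι, f i))

/-- For subgroups `A ≤ B` of `G` with `A` normalized by `B`, the factor group `B/A`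
is soluble; expressed via a surjective homomorphism with kernel `A` (viewed in `B`). -/
def FactorSolvable {G : Type u} [Group G] (A B : Subgroup G) : Prop :=
  ∃ (X : Type u) (inst : Group X),
    letI := inst
    ∃ f : ↥B →* X, Function.Surjective f ∧ f.ker = A.subgroupOf B ∧ IsSolvable X

/-- For subgroups `A ≤ B` of `G` with `A` normalized by `B`, the factor group `B/A`
is a (nonempty) direct product of nonabelian simple groups. -/
def FactorNonabelianSimpleProduct {G : Type u} [Group G] (A B : Subgroup G) : Prop :=
  ∃ (X : Type u) (inst : Group X),
    letI := inst
    ∃ f : ↥B →* X, Function.Surjective f ∧ f.ker = A.subgroupOf B ∧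
      IsNonabelianSimpleProduct X

/-- The nonsoluble length `λ(G)`: the minimum `h` such that `G` has a normal series
`1 = G_0 ≤ G_1 ≤ … ≤ G_{2h+1} = G` in which for `i` even the factor `G_{i+1}/G_i` is
soluble (possibly trivial), and for `i` odd the factor `G_{i+1}/G_i` is a (nonempty)
direct product of nonabelian simple groups. -/
noncomputable def nonsolubleLength (G : Type u) [Group G] : ℕ :=
  sInf {h : ℕ | ∃ c : ℕ → Subgroup G,
    c 0 = ⊥ ∧ c (2 * h + 1) = ⊤ ∧ (∀ i, (c i).Normal) ∧ (∀ i, c i ≤ c (i + 1)) ∧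
    (∀ i < 2 * h + 1, Even i → FactorSolvable (c i) (c (i + 1))) ∧
    (∀ i < 2 * h + 1, ¬ Even i → FactorNonabelianSimpleProduct (c i) (c (i + 1)))}

/-- The upper nonsoluble series of `G`, bundled with normality: the value at `n` is the
pair `(M_n, L_n)`, where `M_{n+1}` is the full preimage in `G` of the soluble radical of
`G/L_n` and `L_{n+1}` is the full preimage in `G` of `F*(G/M_{n+1})`; here `L_0 = ⊥`
(and `M_0 = ⊥` is a dummy value). -/
def upperNSAux (G : Type u) [Group G] :
    ℕ → {H : Subgroup G // H.Normal} × {H : Subgroup G // H.Normal}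
  | 0 => (⟨⊥, inferInstance⟩, ⟨⊥, inferInstance⟩)
  | n + 1 =>
    let Lp := (upperNSAux G n).2
    haveI := Lp.2
    let M : {H : Subgroup G // H.Normal} :=
      ⟨(solubleRadical (G ⧸ Lp.1)).comap (QuotientGroup.mk' Lp.1),
        Subgroup.Normal.comap inferInstance _⟩
    haveI := M.2
    (M, ⟨(genFitting (G ⧸ M.1)).comap (QuotientGroup.mk' M.1),
      Subgroup.Normal.comap inferInstance _⟩)

/-- The term `M_k` of the upper nonsoluble series (for `k ≥ 1`); `M_1` is the soluble
radical of `G`. -/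
def upperM (G : Type u) [Group G] (k : ℕ) : Subgroup G := (upperNSAux G k).1.1

/-- The term `L_k` of the upper nonsoluble series; `L_0 = ⊥` and `L_k` is the full
preimage in `G` of `F*(G/M_k)`. -/
def upperL (G : Type u) [Group G] (k : ℕ) : Subgroup G := (upperNSAux G k).2.1

instance upperM_normal (G : Type u) [Group G] (k : ℕ) : (upperM G k).Normal :=
  (upperNSAux G k).1.2

instance upperL_normal (G : Type u) [Group G] (k : ℕ) : (upperL G k).Normal :=
  (upperNSAux G k).2.2

/-- The kernel of the conjugation action of a group `H` permuting its subnormal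
nonabelian simple subgroups. -/
def simplePermKernel (H : Type u) [Group H] : Subgroup H where
  carrier := {g | ∀ T : Subgroup H, IsSubnormal T → IsSimpleGroup ↥T → IsNonabelian ↥T →
    T.map (MulAut.conj g).toMonoidHom = T}
  one_mem' := by
    intro T _ _ _
    have h1 : (MulAut.conj (1 : H)).toMonoidHom = MonoidHom.id H := by
      ext x; simp
    rw [h1, Subgroup.map_id]
  mul_mem' := by
    intro a b ha hb T h1 h2 h3
    have hab : (MulAut.conj (a * b)).toMonoidHom =
        (MulAut.conj a).toMonoidHom.comp (MulAut.conj b).toMonoidHom := by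
      ext x; simp [mul_assoc]
    rw [hab, ← Subgroup.map_map, hb T h1 h2 h3, ha T h1 h2 h3]
  inv_mem' := by
    intro a ha T h1 h2 h3
    have h := ha T h1 h2 h3
    have hcomp : (MulAut.conj a⁻¹).toMonoidHom.comp (MulAut.conj a).toMonoidHom =
        MonoidHom.id H := by
      ext x; simp; group
    calc T.map (MulAut.conj a⁻¹).toMonoidHom
        = (T.map (MulAut.conj a).toMonoidHom).map (MulAut.conj a⁻¹).toMonoidHom := by
          rw [h]
      _ = T.map ((MulAut.conj a⁻¹).toMonoidHom.comp (MulAut.conj a).toMonoidHom) :=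
          Subgroup.map_map _ _ _
      _ = T := by rw [hcomp, Subgroup.map_id]


/-! `F*(G)` is generated by `F(G)` and the subnormal quasisimple subgroups, and a subnormal
quasisimple subgroup `Q` centralizes every soluble normal subgroup `N`: climbing a subnormal
chain from `Q`, the three subgroups lemma and `Q = [Q, Q]` reduce this to the fact that a soluble
normal subgroup of a quasisimple group is central. Hence `x = y z` with `y ∈ F(G)` and `z`
centralizing `N`, so that `x` and `y` induce the same automorphism of `N`. Then
`M = (F(G) ∩ N)⟨x⟩` is normalized by `N`, because `[N, x] = [N, y] ≤ F(G) ∩ N`, and `M` is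
nilpotent: commutators with elements of `F(G) ∩ N` only see the automorphisms induced on it, so
the lower central series of `M` is dominated by that of the nilpotent group `(F(G) ∩ N)⟨y⟩`.
Thus `M` is a nilpotent normal subgroup of `N⟨x⟩` containing `x`. -/

open scoped commutatorElement

namespace Subgroup

variable {G : Type*} [Group G]

lemma commutator_le_iff_map_le_centralizer_map {X Y T : Subgroup G} [T.Normal] :
    ⁅X, Y⁆ ≤ T ↔ Y.map (QuotientGroup.mk' T) ≤ centralizer (X.map (QuotientGroup.mk' T)) := by
  rw [← commutator_eq_bot_iff_le_centralizer, commutator_comm, ← map_commutator,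
    map_eq_bot_iff, QuotientGroup.ker_mk']

lemma commutator_sup_right_le {X Y Z T : Subgroup G} [T.Normal] (hY : ⁅X, Y⁆ ≤ T)
    (hZ : ⁅X, Z⁆ ≤ T) : ⁅X, Y ⊔ Z⁆ ≤ T := by
  rw [commutator_le_iff_map_le_centralizer_map] at hY hZ ⊢
  rw [map_sup]
  exact sup_le hY hZ

lemma commutator_iSup_left_le {ι : Sort*} {X : ι → Subgroup G} {Y T : Subgroup G} [T.Normal]
    (h : ∀ i, ⁅X i, Y⁆ ≤ T) : ⁅⨆ i, X i, Y⁆ ≤ T := by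
  rw [commutator_comm, commutator_le_iff_map_le_centralizer_map, map_iSup]
  exact iSup_le fun i =>
    le_centralizer_iff.mp (commutator_le_iff_map_le_centralizer_map.mp (h i))

variable {H K : Subgroup G}

/-- `H.lowerCentralSeries` with `⊤` prepended, so that the index counts the weight in `H` and
`⁅paddedLCS H i, H⁆ ≤ paddedLCS H (i + 1)` holds also for `i = 0`. -/
private def paddedLCS (H : Subgroup G) : ℕ → Subgroup G
  | 0 => ⊤
  | i + 1 => H.lowerCentralSeries i

private lemma paddedLCS_normal [H.Normal] : ∀ i, (paddedLCS H i).Normal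
  | 0 => normal_top
  | i + 1 => H.lowerCentralSeries_normal i

private lemma commutator_paddedLCS_le [H.Normal] :
    ∀ i, ⁅paddedLCS H i, H⁆ ≤ paddedLCS H (i + 1)
  | 0 => commutator_le_right _ _
  | _ + 1 => le_rfl

private lemma paddedLCS_antitone : Antitone (paddedLCS H) :=
  antitone_nat_of_succ_le fun
    | 0 => le_top
    | i + 1 => H.lowerCentralSeries_antitone (Nat.le_succ i)

/-- Contains every commutator of weight `c + 1` in elements of `H` and `K`; the summand `(i, j)`
receives those with `i` entries from `H` and `j` from `K`. -/
private def mixedLCS (H K : Subgroup G) (c : ℕ) : Subgroup G :=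
  ⨆ (i) (j) (_ : i + j = c + 1), paddedLCS H i ⊓ paddedLCS K j

private lemma le_mixedLCS {c i j : ℕ} (h : i + j = c + 1) :
    paddedLCS H i ⊓ paddedLCS K j ≤ mixedLCS H K c :=
  le_iSup_of_le i <| le_iSup_of_le j <| le_iSup_of_le h le_rfl

private lemma commutator_mixedLCS_le [H.Normal] [K.Normal] (c : ℕ) :
    ⁅mixedLCS H K c, H ⊔ K⁆ ≤ mixedLCS H K (c + 1) := by
  have : ∀ i j, (paddedLCS H i ⊓ paddedLCS K j).Normal := fun i j =>
    @normal_inf_normal _ _ _ _ (paddedLCS_normal i) (paddedLCS_normal j)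
  have : (mixedLCS H K (c + 1)).Normal := by unfold mixedLCS; infer_instance
  refine commutator_iSup_left_le fun i => commutator_iSup_left_le fun j =>
    commutator_iSup_left_le fun hij => commutator_sup_right_le ?_ ?_
  · refine le_trans (le_inf ?_ ?_) (le_mixedLCS (i := i + 1) (j := j) (by omega))
    · exact (commutator_mono inf_le_left le_rfl).trans (commutator_paddedLCS_le i)
    · exact (commutator_mono inf_le_right le_rfl).trans
        (@commutator_le_left _ _ _ _ (paddedLCS_normal j))
  · refine le_trans (le_inf ?_ ?_) (le_mixedLCS (i := i) (j := j + 1) (by omega))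
    · exact (commutator_mono inf_le_left le_rfl).trans
        (@commutator_le_left _ _ _ _ (paddedLCS_normal i))
    · exact (commutator_mono inf_le_right le_rfl).trans (commutator_paddedLCS_le j)

private lemma lowerCentralSeries_sup_le_mixedLCS [H.Normal] [K.Normal] (c : ℕ) :
    (H ⊔ K).lowerCentralSeries c ≤ mixedLCS H K c := by
  induction c with
  | zero =>
    exact sup_le ((le_inf le_rfl le_top).trans (le_mixedLCS (i := 1) (j := 0) rfl))
      ((le_inf le_top le_rfl).trans (le_mixedLCS (i := 0) (j := 1) rfl))
  | succ c ih => exact (commutator_mono ih le_rfl).trans (commutator_mixedLCS_le c)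

private lemma mixedLCS_eq_bot {m n : ℕ} (hm : H.lowerCentralSeries m = ⊥)
    (hn : K.lowerCentralSeries n = ⊥) : mixedLCS H K (m + n + 1) = ⊥ := by
  refine le_bot_iff.mp (iSup₂_le fun i j => iSup_le fun hij => ?_)
  rcases le_or_gt (m + 1) i with hi | hi
  · exact inf_le_left.trans (hm ▸ paddedLCS_antitone hi)
  · exact inf_le_right.trans (hn ▸ paddedLCS_antitone (show n + 1 ≤ j by omega))

theorem isNilpotent_sup [H.Normal] [K.Normal] (hH : Group.IsNilpotent H)
    (hK : Group.IsNilpotent K) : Group.IsNilpotent ↥(H ⊔ K) := by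
  obtain ⟨m, hm⟩ := (isNilpotent_iff_lowerCentralSeries H).mp hH
  obtain ⟨n, hn⟩ := (isNilpotent_iff_lowerCentralSeries K).mp hK
  exact (isNilpotent_iff_lowerCentralSeries _).mpr
    ⟨m + n + 1, le_bot_iff.mp (mixedLCS_eq_bot hm hn ▸ lowerCentralSeries_sup_le_mixedLCS _)⟩

lemma commutator_eq_bot_of_perfect {Q N M : Subgroup G} (hQ : ⁅Q, Q⁆ = Q)
    (hNQ : ⁅N, Q⁆ ≤ M) (hQM : ⁅Q, M⁆ = ⊥) : ⁅Q, N⁆ = ⊥ := by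
  have hNQQ : ⁅⁅N, Q⁆, Q⁆ = ⊥ :=
    le_bot_iff.mp ((commutator_mono hNQ le_rfl).trans (commutator_comm M Q ▸ hQM.le))
  calc ⁅Q, N⁆ = ⁅⁅Q, Q⁆, N⁆ := by rw [hQ]
    _ = ⊥ := commutator_commutator_eq_bot_of_rotate (commutator_comm N Q ▸ hNQQ) hNQQ

lemma commutator_sup_zpowers_le (B : Subgroup G) [B.Normal] (x : G) :
    ⁅B ⊔ zpowers x, B ⊔ zpowers x⁆ ≤ B := by
  have hB : B.map (QuotientGroup.mk' B) = ⊥ := by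
    rw [map_eq_bot_iff, QuotientGroup.ker_mk']
  suffices h : ⁅B ⊔ zpowers x, B ⊔ zpowers x⁆.map (QuotientGroup.mk' B) = ⊥ by
    rwa [map_eq_bot_iff, QuotientGroup.ker_mk'] at h
  rw [map_commutator, map_sup, MonoidHom.map_zpowers, hB, bot_sup_eq]
  exact commutator_self_eq_bot_iff.mpr inferInstance

lemma commutator_eq_of_map_conjNormal_eq {B K M R : Subgroup G} [B.Normal] (hK : K ≤ B)
    (h : M.map (MulAut.conjNormal (H := B)) = R.map MulAut.conjNormal) : ⁅K, M⁆ = ⁅K, R⁆ := by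
  suffices ∀ {M R : Subgroup G}, M.map (MulAut.conjNormal (H := B)) = R.map MulAut.conjNormal →
      ⁅K, M⁆ ≤ ⁅K, R⁆ from le_antisymm (this h) (this h.symm)
  intro M R h
  refine commutator_le.mpr fun k hk m hm => ?_
  obtain ⟨r, hr, hrm⟩ := mem_map.mp (h ▸ mem_map_of_mem MulAut.conjNormal hm)
  have hconj : m * k⁻¹ * m⁻¹ = r * k⁻¹ * r⁻¹ := by
    simpa [MulAut.conjNormal_apply] using
      congrArg (fun φ : MulAut B => (φ ⟨k⁻¹, B.inv_mem (hK hk)⟩ : G)) hrm.symm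
  have : ⁅k, m⁆ = ⁅k, r⁆ := by
    simp only [commutatorElement_def, mul_assoc] at hconj ⊢
    rw [hconj]
  exact this ▸ commutator_mem_commutator hk hr

theorem isNilpotent_of_map_conjNormal_eq {B M R : Subgroup G} [B.Normal]
    (hM : ⁅M, M⁆ ≤ B) (hBR : B ≤ R)
    (h : M.map (MulAut.conjNormal (H := B)) = R.map MulAut.conjNormal)
    (hR : Group.IsNilpotent R) : Group.IsNilpotent M := by
  have key : ∀ j, M.lowerCentralSeries (j + 1) ≤ R.lowerCentralSeries j ⊓ B := by
    intro j
    induction j with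
    | zero => exact le_inf (hM.trans hBR) hM
    | succ j ih =>
      calc M.lowerCentralSeries (j + 2) ≤ ⁅R.lowerCentralSeries j ⊓ B, M⁆ :=
            commutator_mono ih le_rfl
        _ = ⁅R.lowerCentralSeries j ⊓ B, R⁆ := commutator_eq_of_map_conjNormal_eq inf_le_right h
        _ ≤ R.lowerCentralSeries (j + 1) ⊓ B := le_inf (commutator_mono inf_le_left le_rfl)
            ((commutator_mono inf_le_right le_rfl).trans (commutator_le_left _ _))
  obtain ⟨j, hj⟩ := (isNilpotent_iff_lowerCentralSeries R).mp hR
  exact (isNilpotent_iff_lowerCentralSeries M).mpr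
    ⟨j + 1, le_bot_iff.mp ((key j).trans (inf_le_left.trans hj.le))⟩

end Subgroup

open Subgroup

section

variable {G : Type*} [Group G]

instance fittingSubgroup_normal : (fittingSubgroup G).Normal :=
  sSup_normal _ fun _ h => h.1

lemma le_fittingSubgroup {H : Subgroup G} [hH : H.Normal] (hnil : Group.IsNilpotent H) :
    H ≤ fittingSubgroup G :=
  le_sSup ⟨hH, hnil⟩

theorem isNilpotent_fittingSubgroup [Finite G] : Group.IsNilpotent (fittingSubgroup G) := by
  have hclosed : SupClosed {H : Subgroup G | H.Normal ∧ Group.IsNilpotent H} :=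
    fun H ⟨_, hH⟩ K ⟨_, hK⟩ => ⟨inferInstance, isNilpotent_sup hH hK⟩
  exact (hclosed.sSup_mem (Set.toFinite _) ⟨normal_bot, inferInstance⟩ subset_rfl).2

lemma le_map_fittingSubgroup {M H : Subgroup G} (hMH : M ≤ H) (hHM : H ≤ normalizer (M : Set G))
    (hM : Group.IsNilpotent M) : M ≤ (fittingSubgroup H).map H.subtype := by
  have : (M.subgroupOf H).Normal := (normal_subgroupOf_iff_le_normalizer hMH).mpr hHM
  have : Group.IsNilpotent (M.subgroupOf H) :=
    Group.nilpotent_of_mulEquiv (subgroupOfEquivOfLe hMH).symm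
  simpa [map_subgroupOf_eq_of_le hMH] using map_mono (f := H.subtype) (le_fittingSubgroup this)

theorem IsQuasisimple.le_center {Q : Type*} [Group Q] (hQ : IsQuasisimple Q) {N : Subgroup Q}
    [N.Normal] [Group.IsSolvable N] : N ≤ center Q := by
  obtain ⟨-, hsimple, a, b, hab⟩ := hQ
  rcases (Normal.map ‹_› _ (QuotientGroup.mk'_surjective (center Q))).eq_bot_or_eq_top with h | h
  · rwa [Subgroup.map_eq_bot_iff, QuotientGroup.ker_mk'] at h
  · -- `Q ⧸ center Q` would be a quotient of `N`, hence soluble, hence abelian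
    have hsurj : Function.Surjective ((QuotientGroup.mk' (center Q)).comp N.subtype) := by
      intro q
      obtain ⟨n, hn, rfl⟩ := mem_map.mp (h ▸ mem_top q)
      exact ⟨⟨n, hn⟩, rfl⟩
    have := Group.isSolvable_of_surjective hsurj
    exact absurd (IsSimpleGroup.comm_iff_isSolvable.mpr this a b) hab

lemma IsQuasisimple.commutator_self {Q : Subgroup G} (hQ : IsQuasisimple Q) : ⁅Q, Q⁆ = Q := by
  rw [← map_subtype_commutator, hQ.1, ← MonoidHom.range_eq_map, range_subtype]

lemma IsQuasisimple.commutator_eq_bot_of_le {Q N : Subgroup G} (hQ : IsQuasisimple Q)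
    [Group.IsSolvable N] (hNQ : N ≤ Q) (hQN : Q ≤ normalizer (N : Set G)) : ⁅Q, N⁆ = ⊥ := by
  have : (N.subgroupOf Q).Normal := (normal_subgroupOf_iff_le_normalizer hNQ).mpr hQN
  have : Group.IsSolvable (N.subgroupOf Q) := Group.isSolvable_of_isSolvable_injective
    (f := (subgroupOfEquivOfLe hNQ).toMonoidHom) (subgroupOfEquivOfLe hNQ).injective
  have hcentral := hQ.le_center (N := N.subgroupOf Q)
  rw [commutator_eq_bot_iff_le_centralizer]
  intro q hq n hn
  exact congrArg Subtype.val
    ((mem_center_iff.mp (hcentral (show ⟨n, hNQ hn⟩ ∈ N.subgroupOf Q from hn)) ⟨q, hq⟩).symm)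

theorem IsSubnormal.commutator_eq_bot {Q N : Subgroup G} (hsub : _root_.IsSubnormal Q)
    (hQ : IsQuasisimple Q) [hN : N.Normal] [Group.IsSolvable N] : ⁅Q, N⁆ = ⊥ := by
  obtain ⟨n, c, rfl, hcn, hc⟩ := hsub
  suffices ∀ i ≤ n, c 0 ≤ c i ∧ ∀ N : Subgroup G, Group.IsSolvable N → N ≤ c i →
      c i ≤ normalizer (N : Set G) → ⁅c 0, N⁆ = ⊥ from
    (this n le_rfl).2 N ‹_› (hcn ▸ le_top) (hcn ▸ (normalizer_eq_top_iff.mpr hN).ge)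
  intro i hi
  induction i with
  | zero => exact ⟨le_rfl, fun N _ hN hN' => hQ.commutator_eq_bot_of_le hN hN'⟩
  | succ i ih =>
    obtain ⟨hQi, ih⟩ := ih (by omega)
    obtain ⟨hle, hnormal⟩ := hc i (by omega)
    have hci : c (i + 1) ≤ normalizer (c i : Set G) :=
      (normal_subgroupOf_iff_le_normalizer hle).mp hnormal
    refine ⟨hQi.trans hle, fun N hsol hN hN' => ?_⟩
    have : Group.IsSolvable ↥(N ⊓ c i) :=
      Group.isSolvable_of_isSolvable_injective (inclusion_injective inf_le_left)
    refine commutator_eq_bot_of_perfect hQ.commutator_self (le_inf ?_ ?_)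
      (ih (N ⊓ c i) this inf_le_right
        ((le_inf (hle.trans hN') le_normalizer).trans inf_normalizer_le_normalizer_inf))
    · exact le_normalizer_iff_commutator_le_left.mp (hQi.trans (hle.trans hN'))
    · exact (commutator_mono le_rfl hQi).trans
        (le_normalizer_iff_commutator_le_right.mp (hN.trans hci))

theorem genFitting_le_sup_centralizer {N : Subgroup G} [N.Normal] [Group.IsSolvable N] :
    genFitting G ≤ fittingSubgroup G ⊔ centralizer (N : Set G) := by
  refine normalClosure_le_normal (Set.union_subset (fun x hx => mem_sup_left hx) ?_)
  rintro x ⟨Q, hsub, hQ, hx⟩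
  exact mem_sup_right (commutator_eq_bot_iff_le_centralizer.mp (hsub.commutator_eq_bot hQ) hx)

lemma MulAut.conjNormal_mul_of_mem_centralizer {B : Subgroup G} [B.Normal] (y : G) {z : G}
    (hz : z ∈ centralizer (B : Set G)) :
    MulAut.conjNormal (H := B) (y * z) = MulAut.conjNormal y := by
  rw [map_mul, mul_eq_left]
  ext b
  simp only [MulAut.conjNormal_apply, MulAut.one_apply, ← mem_centralizer_iff.mp hz b b.2,
    mul_inv_cancel_right]

theorem mul_mem_map_fittingSubgroup_sup_zpowers {A N : Subgroup G}
    [A.Normal] [N.Normal] (hA : Group.IsNilpotent A) {y z : G} (hy : y ∈ A)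
    (hz : z ∈ centralizer (N : Set G)) :
    y * z ∈ (fittingSubgroup ↥(N ⊔ zpowers (y * z))).map (N ⊔ zpowers (y * z)).subtype := by
  set x := y * z
  set B := A ⊓ N
  have hzpowers : ∀ (C : Subgroup G) [C.Normal], C ≤ N →
      (zpowers x).map (MulAut.conjNormal (H := C)) = (zpowers y).map MulAut.conjNormal :=
    fun C _ hC => by
      rw [MonoidHom.map_zpowers, MonoidHom.map_zpowers,
        MulAut.conjNormal_mul_of_mem_centralizer y (centralizer_le hC hz)]
  have hxM : x ∈ B ⊔ zpowers x := mem_sup_right (mem_zpowers x)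
  have hNM : ⁅N, B ⊔ zpowers x⁆ ≤ B := by
    refine commutator_sup_right_le (commutator_le_right _ _) ?_
    rw [commutator_eq_of_map_conjNormal_eq le_rfl (hzpowers N le_rfl)]
    exact le_inf ((commutator_mono le_rfl (zpowers_le.mpr hy)).trans (commutator_le_right _ _))
      (commutator_le_left _ _)
  have hR : Group.IsNilpotent ↥(B ⊔ zpowers y) := by
    obtain ⟨j, hj⟩ := (isNilpotent_iff_lowerCentralSeries A).mp hA
    exact (isNilpotent_iff_lowerCentralSeries _).mpr ⟨j, le_bot_iff.mp
      (hj ▸ lowerCentralSeries_mono j (sup_le inf_le_left (zpowers_le.mpr hy)))⟩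
  have hM : Group.IsNilpotent ↥(B ⊔ zpowers x) :=
    isNilpotent_of_map_conjNormal_eq (commutator_sup_zpowers_le B x) le_sup_left
      (by rw [Subgroup.map_sup, Subgroup.map_sup, hzpowers B inf_le_right]) hR
  refine le_map_fittingSubgroup (sup_le_sup_right inf_le_right _) ?_ hM hxM
  exact sup_le (le_normalizer_iff_commutator_le_right.mpr (hNM.trans le_sup_left))
    (zpowers_le.mpr (le_normalizer hxM))

end

/-- **Lemma.** Let `N` be a soluble normal subgroup of a finite group `G`.
If `x ∈ F*(G)`, then `x ∈ F(N⟨x⟩)`. -/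
theorem mem_fittingSubgroup_of_mem_genFitting
    (G : Type u) [Group G] [Finite G] (N : Subgroup G) (hN : N.Normal)
    (hsol : IsSolvable ↥N) (x : G) (hx : x ∈ genFitting G) :
    x ∈ (fittingSubgroup ↥(N ⊔ Subgroup.zpowers x)).map
      (N ⊔ Subgroup.zpowers x).subtype := by
  have := hN
  have : Group.IsSolvable N := hsol
  obtain ⟨y, hy, z, hz, rfl⟩ :=
    Subgroup.mem_sup_of_normal_right.mp (genFitting_le_sup_centralizer (N := N) hx)
  exact mul_mem_map_fittingSubgroup_sup_zpowers isNilpotent_fittingSubgroup hy hz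
end

section
/- Let G be a finite group with upper nonsoluble series 1 = L_0 ≤ M_1 < L_1 ≤ M_2 < … ≤ M_{m+1} = G, where M_k and L_k are defined as follows: M_1 = S(G) is the soluble radical, L_k is the full inverse image in G of F*(G/M_k), and M_{k+1} is the full inverse image in G of the soluble radical of G/L_k. Let N be a normal subgroup of G and K/N a simple subnormal subgroup of G/N. Let D be a subgroup of G such that K = DN, D ≤ L_j N, and D is not contained in M_j N, for some index j. Then [D, D^x] · N · M_j = K · M_j for every x ∈ L_j N, where D^x = x^{-1}Dx. -/
universe u v

/-!
Pass to `Ḡ = G/(N M_j)`, where `j ≥ 1` since `M_0 = L_0 = 1`. As `G/M_j` has trivial soluble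
radical, `F*(G/M_j)` is generated by subnormal quasisimple subgroups and has trivial centre; both
properties pass to its image `E` in `Ḡ`, which contains the images of `L_j N` and of `K`. By
Wielandt's lemma each subnormal quasisimple subgroup of `Ḡ` lies in the subnormal subgroup `K̄` or
centralizes it. Hence `E` normalizes `K̄`, and `K̄ ≠ 1`, a quotient of the simple group `K/N`, is
not abelian, as it would then be central in `E`. So `[D, D^x]` maps onto
`[K̄, K̄^x̄] = [K̄, K̄] = K̄`.
-/

theorem IsSubnormal.isSubnormal {G : Type*} [Group G] {H : Subgroup G} (h : IsSubnormal H) :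
    H.IsSubnormal := by
  obtain ⟨n, c, rfl, hn, hc⟩ := h
  suffices ∀ k ≤ n, (c (n - k)).IsSubnormal by simpa using this n le_rfl
  intro k hk
  induction k with
  | zero => simp [hn]
  | succ k ih =>
    obtain ⟨hle, hnorm⟩ := hc (n - (k + 1)) (by omega)
    rw [show n - (k + 1) + 1 = n - k by omega] at hle hnorm
    exact .step _ _ hle (ih (by omega)) hnorm

namespace Subgroup

variable {G G' : Type*} [Group G] [Group G']

theorem map_inf_comap_of_le_map (f : G →* G') {T : Subgroup G} {N : Subgroup G'}
    (hN : N ≤ T.map f) : (T ⊓ N.comap f).map f = N := by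
  refine le_antisymm ((map_mono inf_le_right).trans (map_comap_le f N)) fun n hn => ?_
  obtain ⟨t, ht, rfl⟩ := hN hn
  exact ⟨t, ⟨ht, hn⟩, rfl⟩

theorem map_map_conj (f : G →* G') (H : Subgroup G) (g : G) :
    (H.map (MulAut.conj g).toMonoidHom).map f = (H.map f).map (MulAut.conj (f g)).toMonoidHom := by
  rw [map_map, map_map]
  congr 1
  ext
  simp

theorem commutator_map_eq_bot_or_eq (f : G →* G') {A : Subgroup G} [IsSimpleGroup A] :
    ⁅A.map f, A.map f⁆ = ⊥ ∨ ⁅A.map f, A.map f⁆ = A.map f := by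
  rw [← map_commutator, ← map_subtype_commutator, map_map]
  rcases (commutator_normal (⊤ : Subgroup A) ⊤).eq_bot_or_eq_top with h | h
  · left
    rw [_root_.commutator_def, h, map_bot]
  · right
    rw [_root_.commutator_def, h, ← map_map, ← MonoidHom.range_eq_map, range_subtype]

theorem sSup_normal_of_map_conj_mem {𝒬 : Set (Subgroup G)}
    (h𝒬 : ∀ T ∈ 𝒬, ∀ g : G, T.map (MulAut.conj g).toMonoidHom ∈ 𝒬) : (sSup 𝒬).Normal := by
  refine ⟨fun n hn g => ?_⟩
  have := mem_map_of_mem (MulAut.conj g).toMonoidHom hn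
  rw [(gc_map_comap _).l_sSup] at this
  exact iSup₂_le (fun T hT => le_sSup (h𝒬 T hT g)) this

/-- Quasisimplicity, stated inside the ambient group so that it passes to images; `⊥` also
qualifies. -/
def IsWeaklyQuasisimple (T : Subgroup G) : Prop :=
  ⁅T, T⁆ = T ∧ ∀ N ≤ T, T ≤ normalizer (N : Set G) → N = T ∨ ⁅T, N⁆ = ⊥

theorem IsWeaklyQuasisimple.map {T : Subgroup G} (hT : T.IsWeaklyQuasisimple) (f : G →* G') :
    (T.map f).IsWeaklyQuasisimple := by
  refine ⟨by rw [← map_commutator, hT.1], fun N hNT hTN => ?_⟩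
  have hpull : T ≤ normalizer ((T ⊓ N.comap f : Subgroup G) : Set G) :=
    (le_inf le_normalizer ((map_le_iff_le_comap.mp hTN).trans (le_normalizer_comap f))).trans
      inf_normalizer_le_normalizer_inf
  rw [← map_inf_comap_of_le_map f hNT]
  rcases hT.2 _ inf_le_left hpull with h | h
  · exact Or.inl (by rw [h])
  · exact Or.inr (by rw [← map_commutator, h, map_bot])

theorem isWeaklyQuasisimple_of_isQuasisimple {T : Subgroup G} (hT : IsQuasisimple T) :
    T.IsWeaklyQuasisimple := by
  obtain ⟨hperf, hsimple, -⟩ := hT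
  have hTtop : (⊤ : Subgroup T).map T.subtype = T := by
    rw [← MonoidHom.range_eq_map, range_subtype]
  refine ⟨by rw [← map_subtype_commutator, hperf, hTtop], fun N hNT hTN => ?_⟩
  have : (N.subgroupOf T).Normal := (normal_subgroupOf_iff_le_normalizer hNT).mpr hTN
  rcases hsimple.eq_bot_or_eq_top_of_normal _ (this.map _ (QuotientGroup.mk'_surjective _)) with
    h | h
  · right
    rw [map_eq_bot_iff, QuotientGroup.ker_mk', ← commutator_top_left_eq_bot_iff_le_center] at h
    calc ⁅T, N⁆ = ⁅⊤, N.subgroupOf T⁆.map T.subtype := by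
          rw [map_commutator, map_subgroupOf_eq_of_le hNT, hTtop]
      _ = ⊥ := by rw [h, map_bot]
  · left
    -- `T/Z(T)` is covered by `N`, so `T/N` is abelian and `N` contains `T = [T, T]`
    have hsup : N.subgroupOf T ⊔ center T = ⊤ := by
      rw [← QuotientGroup.ker_mk' (center T), ← comap_map_eq, h, comap_top]
    have := Normal.commutator_le_of_self_sup_commutative_eq_top hsup inferInstance
    rw [hperf, top_le_iff, subgroupOf_eq_top] at this
    exact le_antisymm hNT this

/-- Wielandt's argument, run up a subnormal series `T = f 0 ⊴ f 1 ⊴ ⋯ ⊴ f n = ⊤`: once `T`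
centralizes `N ⊓ f i`, the commutator `⁅T, N ⊓ f (i + 1)⁆ ≤ N ⊓ f i` is centralized by `T`, so by
the three subgroups lemma `⁅T, N ⊓ f (i + 1)⁆ = ⁅⁅T, T⁆, N ⊓ f (i + 1)⁆ = ⊥`. -/
theorem IsWeaklyQuasisimple.le_or_commutator_eq_bot_of_le_normalizer {T N : Subgroup G}
    (hT : T.IsWeaklyQuasisimple) (hsn : T.IsSubnormal) (hTN : T ≤ normalizer (N : Set G)) :
    T ≤ N ∨ ⁅T, N⁆ = ⊥ := by
  obtain ⟨n, f, hmono, hnorm, rfl, hn⟩ := hsn.exists_chain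
  suffices ∀ i, f 0 ≤ N ∨ ⁅f 0, N ⊓ f i⁆ = ⊥ by simpa [hn] using this n
  intro i
  induction i with
  | zero =>
    have hnorm₀ : f 0 ≤ normalizer ((N ⊓ f 0 : Subgroup G) : Set G) :=
      (le_inf hTN le_normalizer).trans inf_normalizer_le_normalizer_inf
    exact (hT.2 _ inf_le_right hnorm₀).imp_left fun h => inf_eq_right.mp h
  | succ i ih =>
    refine ih.imp_right fun hcomm => ?_
    have hstep : f (i + 1) ≤ normalizer (f i : Set G) :=
      (normal_subgroupOf_iff_le_normalizer (hmono i.le_succ)).mp (hnorm i)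
    have hle : ⁅f 0, N ⊓ f (i + 1)⁆ ≤ N ⊓ f i :=
      le_inf ((commutator_mono le_rfl inf_le_left).trans
          (le_normalizer_iff_commutator_le_right.mp hTN))
        ((commutator_mono (hmono i.zero_le) inf_le_right).trans
          (le_normalizer_iff_commutator_le_left.mp hstep))
    have h₁ : ⁅⁅f 0, N ⊓ f (i + 1)⁆, f 0⁆ = ⊥ := by
      rw [eq_bot_iff, ← hcomm, commutator_comm (f 0) (N ⊓ f i)]
      exact commutator_mono hle le_rfl
    have h₂ : ⁅⁅N ⊓ f (i + 1), f 0⁆, f 0⁆ = ⊥ := by rwa [commutator_comm (N ⊓ f (i + 1))]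
    simpa only [hT.1] using commutator_commutator_eq_bot_of_rotate h₁ h₂

theorem IsWeaklyQuasisimple.le_or_commutator_eq_bot {T B : Subgroup G}
    (hT : T.IsWeaklyQuasisimple) (hsn : T.IsSubnormal) (hB : B.IsSubnormal) :
    T ≤ B ∨ ⁅T, B⁆ = ⊥ := by
  induction hB with
  | top => exact Or.inl le_top
  | step B K hBK _ hBK' ih =>
    rcases ih with h | h
    · exact hT.le_or_commutator_eq_bot_of_le_normalizer hsn
        (h.trans ((normal_subgroupOf_iff_le_normalizer hBK).mp hBK'))
    · exact Or.inr (le_bot_iff.mp (h ▸ commutator_mono le_rfl hBK))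

theorem IsWeaklyQuasisimple.le_normalizer_of_isSubnormal {T B : Subgroup G}
    (hT : T.IsWeaklyQuasisimple) (hsn : T.IsSubnormal) (hB : B.IsSubnormal) :
    T ≤ normalizer (B : Set G) :=
  (hT.le_or_commutator_eq_bot hsn hB).elim (fun h => h.trans le_normalizer)
    fun h => (commutator_eq_bot_iff_le_centralizer.mp h).trans (centralizer_le_normalizer _)

theorem map_sSup_inf_centralizer_eq_bot {𝒬 : Set (Subgroup G)}
    (h𝒬 : ∀ T ∈ 𝒬, T.IsSubnormal ∧ T.IsWeaklyQuasisimple)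
    (hZ : sSup 𝒬 ⊓ centralizer ((sSup 𝒬 : Subgroup G) : Set G) = ⊥) (f : G →* G') :
    (sSup 𝒬).map f ⊓ centralizer ((sSup 𝒬).map f : Set G') = ⊥ := by
  set E := sSup 𝒬
  set P := (centralizer (E.map f : Set G')).comap f
  set X := sSup {T ∈ 𝒬 | ¬ T ≤ f.ker}
  have hout : ∀ T ∈ 𝒬, ¬ T ≤ f.ker → ⁅T, f.ker⁆ = ⊥ := fun T hT hTk =>
    ((h𝒬 T hT).2.le_or_commutator_eq_bot_of_le_normalizer (h𝒬 T hT).1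
      (by rw [normalizer_eq_top_iff.mpr f.normal_ker]; exact le_top)).resolve_left hTk
  have hX : X ≤ centralizer (f.ker : Set G) :=
    sSup_le fun T ⟨hT, hTk⟩ => commutator_eq_bot_iff_le_centralizer.mp (hout T hT hTk)
  -- three subgroups lemma: `⁅T, P⁆ ≤ ker f` is centralized by `T`, hence `⁅T, P⁆ = ⁅⁅T, T⁆, P⁆ = ⊥`
  have hP : ∀ T ∈ 𝒬, ¬ T ≤ f.ker → T ≤ centralizer (P : Set G) := fun T hT hTk => by
    have hTP : ⁅T, P⁆ ≤ f.ker := by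
      rw [← map_eq_bot_iff, map_commutator, eq_bot_iff]
      exact (commutator_mono (map_mono (le_sSup hT)) (map_comap_le _ _)).trans
        (commutator_eq_bot_iff_le_centralizer.mpr (le_centralizer_iff.mp le_rfl)).le
    have h₁ : ⁅⁅T, P⁆, T⁆ = ⊥ := by
      rw [eq_bot_iff, ← hout T hT hTk, commutator_comm T f.ker]
      exact commutator_mono hTP le_rfl
    have h₂ : ⁅⁅P, T⁆, T⁆ = ⊥ := by rwa [commutator_comm P T]
    have := commutator_commutator_eq_bot_of_rotate h₁ h₂
    rwa [(h𝒬 T hT).2.1, commutator_eq_bot_iff_le_centralizer] at this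
  have hPX : P ⊓ X = ⊥ := by
    rw [eq_bot_iff, ← hZ]
    refine le_inf (inf_le_right.trans (sSup_le_sSup (Set.sep_subset _ _))) ?_
    refine le_centralizer_iff.mp (sSup_le fun T hT => ?_)
    by_cases hTk : T ≤ f.ker
    · exact le_centralizer_iff.mp (inf_le_right.trans (hX.trans (centralizer_le hTk)))
    · exact (hP T hT hTk).trans (centralizer_le inf_le_left)
  have hEX : E.map f ≤ X.map f := by
    have : E ≤ X ⊔ f.ker := sSup_le fun T hT => by
      by_cases hTk : T ≤ f.ker
      · exact hTk.trans le_sup_right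
      · exact le_sup_of_le_left (le_sSup (show T ∈ {T ∈ 𝒬 | ¬ T ≤ f.ker} from ⟨hT, hTk⟩))
    simpa [map_sup] using map_mono (f := f) this
  rw [eq_bot_iff]
  rintro _ ⟨hc, hcZ⟩
  obtain ⟨x, hx, rfl⟩ := hEX hc
  have : x ∈ P ⊓ X := ⟨hcZ, hx⟩
  rw [hPX, mem_bot] at this
  rw [this, map_one]
  exact one_mem _

/-- Modelled on the layer `E(G)` of a finite group `G`, which is `F*(G)` when the soluble radical
of `G` is trivial. -/
def IsCentrelessLayer (E : Subgroup G) : Prop :=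
  (∃ 𝒬 : Set (Subgroup G), (∀ T ∈ 𝒬, T.IsSubnormal ∧ T.IsWeaklyQuasisimple) ∧ sSup 𝒬 = E) ∧
    E ⊓ centralizer (E : Set G) = ⊥

theorem IsCentrelessLayer.map {E : Subgroup G} (hE : E.IsCentrelessLayer) {f : G →* G'}
    (hf : Function.Surjective f) : (E.map f).IsCentrelessLayer := by
  obtain ⟨⟨𝒬, h𝒬, rfl⟩, hZ⟩ := hE
  refine ⟨⟨Subgroup.map f '' 𝒬, ?_, ?_⟩, map_sSup_inf_centralizer_eq_bot h𝒬 hZ f⟩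
  · rintro _ ⟨T, hT, rfl⟩
    exact ⟨(h𝒬 T hT).1.map hf, (h𝒬 T hT).2.map f⟩
  · rw [(gc_map_comap f).l_sSup, sSup_image]

theorem IsCentrelessLayer.le_normalizer {E K : Subgroup G} (hE : E.IsCentrelessLayer)
    (hK : K.IsSubnormal) : E ≤ normalizer (K : Set G) := by
  obtain ⟨⟨𝒬, h𝒬, rfl⟩, -⟩ := hE
  exact sSup_le fun T hT => (h𝒬 T hT).2.le_normalizer_of_isSubnormal (h𝒬 T hT).1 hK

theorem IsCentrelessLayer.eq_bot_of_commutator_eq_bot {E K : Subgroup G}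
    (hE : E.IsCentrelessLayer) (hK : K.IsSubnormal) (hKE : K ≤ E) (hKK : ⁅K, K⁆ = ⊥) :
    K = ⊥ := by
  obtain ⟨⟨𝒬, h𝒬, rfl⟩, hZ⟩ := hE
  have hcent : sSup 𝒬 ≤ centralizer (K : Set G) := sSup_le fun T hT => by
    rcases (h𝒬 T hT).2.le_or_commutator_eq_bot (h𝒬 T hT).1 hK with h | h
    · rw [← (h𝒬 T hT).2.1]
      exact (commutator_mono h h).trans (hKK.le.trans bot_le)
    · exact commutator_eq_bot_iff_le_centralizer.mp h
  rw [eq_bot_iff, ← hZ]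
  exact le_inf hKE (le_centralizer_iff.mp hcent)

theorem IsCentrelessLayer.commutator_map_conj_eq {E K : Subgroup G} (hE : E.IsCentrelessLayer)
    (hK : K.IsSubnormal) (hKE : K ≤ E) (hK₀ : K ≠ ⊥) (hKK : ⁅K, K⁆ = ⊥ ∨ ⁅K, K⁆ = K) {y : G}
    (hy : y ∈ E) : ⁅K, K.map (MulAut.conj y).toMonoidHom⁆ = K := by
  have : K.map (MulAut.conj y).toMonoidHom = K :=
    mem_normalizer_iff_map_conj_eq.mp (hE.le_normalizer hK hy)
  rw [this]
  exact hKK.resolve_left fun h => hK₀ (hE.eq_bot_of_commutator_eq_bot hK hKE h)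

theorem map_commutator_map_conj_eq {Q : Type*} [Group Q] {π : G →* Q}
    (hπ : Function.Surjective π) {N K D : Subgroup G} {E : Subgroup Q} [N.Normal]
    (hsub : (K.map (QuotientGroup.mk' N)).IsSubnormal)
    [IsSimpleGroup (K.map (QuotientGroup.mk' N))] (hNπ : N ≤ π.ker) (hDN : D ⊔ N = K)
    (hE : E.IsCentrelessLayer) (hKE : K.map π ≤ E) (hK₀ : K.map π ≠ ⊥) {x : G} (hx : π x ∈ E) :
    ⁅D, D.map (MulAut.conj x⁻¹).toMonoidHom⁆.map π = K.map π := by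
  have hDK : D.map π = K.map π := by
    rw [← hDN, Subgroup.map_sup, (Subgroup.map_eq_bot_iff _).mpr hNπ, sup_bot_eq]
  have hθ : (K.map (QuotientGroup.mk' N)).map (QuotientGroup.lift N π hNπ) = K.map π := by
    rw [map_map, QuotientGroup.lift_comp_mk']
  have hKsn : (K.map π).IsSubnormal :=
    hθ ▸ hsub.map (QuotientGroup.lift_surjective_of_surjective _ _ hπ hNπ)
  have hKK := commutator_map_eq_bot_or_eq (QuotientGroup.lift N π hNπ)
    (A := K.map (QuotientGroup.mk' N))
  rw [hθ] at hKK
  rw [map_commutator, map_map_conj, hDK, map_inv,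
    hE.commutator_map_conj_eq hKsn hKE hK₀ hKK (inv_mem hx)]

end Subgroup

section SolubleRadical

open Subgroup

variable {G G' : Type*} [Group G] [Group G']

theorem Subgroup.isSolvable_of_le {H K : Subgroup G} (hHK : H ≤ K) [Group.IsSolvable K] :
    Group.IsSolvable H :=
  Group.isSolvable_of_isSolvable_injective (inclusion_injective hHK)

theorem Subgroup.isSolvable_map (f : G →* G') (H : Subgroup G) [Group.IsSolvable H] :
    Group.IsSolvable (H.map f) :=
  Group.isSolvable_of_surjective (f.subgroupMap_surjective H)

theorem Subgroup.isSolvable_of_isSolvable_map {f : G →* G'} {H : Subgroup G}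
    [Group.IsSolvable (H.map f)] [Group.IsSolvable f.ker] : Group.IsSolvable H :=
  have : Group.IsSolvable (f.ker.subgroupOf H) := Group.isSolvable_of_isSolvable_injective
    (f := (H.subtype.comp (f.ker.subgroupOf H).subtype).codRestrict f.ker fun x => x.2)
    fun x y h => Subtype.ext (Subtype.ext (congrArg (fun z : f.ker => (z : G)) h))
  Group.isSolvable_of_ker_le_range (f.ker.subgroupOf H).subtype (f.subgroupMap H)
    (by rw [ker_subgroupMap, range_subtype])

theorem Subgroup.isSolvable_sup {H K : Subgroup G} [K.Normal] [Group.IsSolvable H]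
    [Group.IsSolvable K] : Group.IsSolvable ↥(H ⊔ K) := by
  have : Group.IsSolvable (QuotientGroup.mk' K).ker := by rwa [QuotientGroup.ker_mk']
  have : Group.IsSolvable ((H ⊔ K).map (QuotientGroup.mk' K)) := by
    rw [map_sup, (map_eq_bot_iff _).mpr (QuotientGroup.ker_mk' K).ge, sup_bot_eq]
    exact isSolvable_map _ H
  exact isSolvable_of_isSolvable_map (f := QuotientGroup.mk' K)

theorem le_solubleRadical {H : Subgroup G} (hH : H.Normal) (hs : Group.IsSolvable H) :
    H ≤ solubleRadical G :=
  fun _ hx => subset_normalClosure ⟨H, hH, hs, hx⟩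

theorem isSolvable_solubleRadical [Finite G] : Group.IsSolvable (solubleRadical G) := by
  obtain ⟨R, ⟨hRn, hRs⟩, hmax⟩ := exists_maximal_of_wellFoundedGT
    (fun H : Subgroup G => H.Normal ∧ Group.IsSolvable H) ⟨⊥, normal_bot, inferInstance⟩
  have : solubleRadical G ≤ R := normalClosure_le_normal <| by
    rintro x ⟨H, hH, hs, hx⟩
    have : Group.IsSolvable H := hs
    exact hmax ⟨sup_normal H R, isSolvable_sup⟩ le_sup_right (mem_sup_left hx)
  exact isSolvable_of_le this

theorem solubleRadical_quotient_comap_eq_bot [Finite G] (L : Subgroup G) [L.Normal] :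
    solubleRadical (G ⧸ (solubleRadical (G ⧸ L)).comap (QuotientGroup.mk' L)) = ⊥ := by
  set M := (solubleRadical (G ⧸ L)).comap (QuotientGroup.mk' L)
  set R := (solubleRadical (G ⧸ M)).comap (QuotientGroup.mk' M)
  have hLM : L ≤ (QuotientGroup.mk' M).ker := by
    rw [QuotientGroup.ker_mk']
    exact (QuotientGroup.ker_mk' L).ge.trans (MonoidHom.ker_le_comap _ _)
  set β := QuotientGroup.lift L (QuotientGroup.mk' M) hLM
  -- `R/L` is soluble, as an extension of `M/L` by `R/M`
  have : Group.IsSolvable β.ker := by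
    have : Group.IsSolvable (solubleRadical (G ⧸ L)) := isSolvable_solubleRadical
    refine isSolvable_of_le (K := solubleRadical (G ⧸ L)) ?_
    rw [QuotientGroup.ker_lift, QuotientGroup.ker_mk',
      map_comap_eq_self_of_surjective (QuotientGroup.mk'_surjective L)]
  have : Group.IsSolvable ((R.map (QuotientGroup.mk' L)).map β) := by
    rw [map_map, QuotientGroup.lift_comp_mk',
      map_comap_eq_self_of_surjective (QuotientGroup.mk'_surjective M)]
    exact isSolvable_solubleRadical
  have hR : R ≤ M := map_le_iff_le_comap.mp <| le_solubleRadical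
    ((normal_comap _).map _ (QuotientGroup.mk'_surjective L))
    (isSolvable_of_isSolvable_map (f := β))
  rw [eq_bot_iff, ← map_comap_eq_self_of_surjective (QuotientGroup.mk'_surjective M)
    (solubleRadical _), map_le_iff_le_comap, MonoidHom.comap_bot, QuotientGroup.ker_mk']
  exact hR

theorem exists_isCentrelessLayer_genFitting_le [Finite G] (hrad : solubleRadical G = ⊥) :
    ∃ E : Subgroup G, E.IsCentrelessLayer ∧ genFitting G ≤ E := by
  set 𝒬 := {T : Subgroup G | T.IsSubnormal ∧ T.IsWeaklyQuasisimple}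
  have : (sSup 𝒬).Normal := sSup_normal_of_map_conj_mem fun T hT g =>
    ⟨hT.1.map (MulAut.conj g).surjective, hT.2.map _⟩
  have hZ : sSup 𝒬 ⊓ centralizer ((sSup 𝒬 : Subgroup G) : Set G) = ⊥ := by
    rw [eq_bot_iff, ← hrad]
    exact le_solubleRadical inferInstance
      (Group.isSolvable_of_comm fun a b => Subtype.ext (mem_centralizer_iff.mp b.2.2 a a.2.1))
  have hfit : fittingSubgroup G = ⊥ := by
    rw [eq_bot_iff, ← hrad]
    exact sSup_le fun H ⟨hH, _⟩ => le_solubleRadical hH inferInstance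
  refine ⟨sSup 𝒬, ⟨⟨𝒬, fun T hT => hT, rfl⟩, hZ⟩, normalClosure_le_normal ?_⟩
  rintro x (hx | ⟨Q, hsn, hQ, hx⟩)
  · rw [SetLike.mem_coe, hfit, mem_bot] at hx
    rw [hx]
    exact one_mem _
  · exact le_sSup (show Q ∈ 𝒬 from ⟨hsn.isSubnormal, isWeaklyQuasisimple_of_isQuasisimple hQ⟩) hx

end SolubleRadical

section UpperNonsolubleSeries

open Subgroup

variable {G : Type u} [Group G] [Finite G]

theorem solubleRadical_quotient_upperM_eq_bot (k : ℕ) :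
    solubleRadical (G ⧸ upperM G (k + 1)) = ⊥ :=
  solubleRadical_quotient_comap_eq_bot (upperL G k)

theorem exists_isCentrelessLayer_map_upperL_le (k : ℕ) {Q : Type*} [Group Q] {π : G →* Q}
    (hπ : Function.Surjective π) (hM : upperM G (k + 1) ≤ π.ker) :
    ∃ E : Subgroup Q, E.IsCentrelessLayer ∧ (upperL G (k + 1)).map π ≤ E := by
  obtain ⟨E, hE, hFE⟩ :=
    exists_isCentrelessLayer_genFitting_le (solubleRadical_quotient_upperM_eq_bot (G := G) k)
  refine ⟨E.map (QuotientGroup.lift _ π hM),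
    hE.map (QuotientGroup.lift_surjective_of_surjective _ _ hπ hM), ?_⟩
  calc (upperL G (k + 1)).map π
      = ((upperL G (k + 1)).map (QuotientGroup.mk' _)).map (QuotientGroup.lift _ π hM) := by
        rw [map_map, QuotientGroup.lift_comp_mk']
    _ ≤ E.map (QuotientGroup.lift _ π hM) := map_mono ((map_comap_le _ _).trans hFE)


end UpperNonsolubleSeries

theorem commutator_conj_sup_eq_general
    (G : Type u) [Group G] [Finite G] (N K D : Subgroup G)
    (hN : N.Normal)
    (hsub : IsSubnormal (K.map (QuotientGroup.mk' N)))
    (hsimple : IsSimpleGroup ↥(K.map (QuotientGroup.mk' N)))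
    (j : ℕ) (hDN : D ⊔ N = K)
    (hDL : D ≤ upperL G j ⊔ N) (hDM : ¬ D ≤ upperM G j ⊔ N) :
    ∀ x ∈ upperL G j ⊔ N,
      ⁅D, D.map (MulAut.conj x⁻¹).toMonoidHom⁆ ⊔ N ⊔ upperM G j = K ⊔ upperM G j := by
  intro x hx
  obtain _ | k := j
  · exact absurd hDL hDM
  set W := N ⊔ upperM G (k + 1)
  set π := QuotientGroup.mk' W
  have hNπ : N ≤ π.ker := by rw [QuotientGroup.ker_mk']; exact le_sup_left
  obtain ⟨E, hE, hLE⟩ := exists_isCentrelessLayer_map_upperL_le k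
    (QuotientGroup.mk'_surjective W) (by rw [QuotientGroup.ker_mk']; exact le_sup_right)
  have hπN : ∀ H : Subgroup G, (H ⊔ N).map π = H.map π := fun H => by
    rw [Subgroup.map_sup, (Subgroup.map_eq_bot_iff _).mpr hNπ, sup_bot_eq]
  have hKE : K.map π ≤ E := by
    rw [← hDN, hπN]
    exact (Subgroup.map_mono hDL).trans ((hπN _).le.trans hLE)
  have hK₀ : K.map π ≠ ⊥ := by
    rw [← hDN, hπN, Ne, Subgroup.map_eq_bot_iff, QuotientGroup.ker_mk']
    rwa [sup_comm] at hDM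
  have hxE : π x ∈ E := hLE (hπN _ ▸ Subgroup.mem_map_of_mem π hx)
  have hNK : N ≤ K := hDN ▸ le_sup_right
  calc ⁅D, D.map (MulAut.conj x⁻¹).toMonoidHom⁆ ⊔ N ⊔ upperM G (k + 1)
      = ⁅D, D.map (MulAut.conj x⁻¹).toMonoidHom⁆ ⊔ π.ker := by
        rw [sup_assoc, QuotientGroup.ker_mk']
    _ = K ⊔ π.ker := Subgroup.map_eq_map_iff.mp <|
        Subgroup.map_commutator_map_conj_eq (QuotientGroup.mk'_surjective W) hsub.isSubnormal
          hNπ hDN hE hKE hK₀ hxE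
    _ = K ⊔ upperM G (k + 1) := by rw [QuotientGroup.ker_mk', ← sup_assoc, sup_eq_left.mpr hNK]

/-- **Lemma.** Let `N` be a normal subgroup of a finite group `G` and `K/N` a simple
subnormal subgroup of `G/N`.  Let `D` be a subgroup of `G` such that `K = DN`,
`D ≤ L_j(G)N` and `D ≰ M_j(G)N` (where `(M_j, L_j)` is the upper nonsoluble series).
Then `[D, D^x]·N·M_j(G) = K·M_j(G)` for any `x ∈ L_j(G)N`. -/
theorem commutator_conj_sup_eq
    (G : Type u) [Group G] [Finite G] (N K D : Subgroup G)
    (hN : N.Normal) (hNK : N ≤ K)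
    (hsub : IsSubnormal (K.map (QuotientGroup.mk' N)))
    (hsimple : IsSimpleGroup ↥(K.map (QuotientGroup.mk' N)))
    (j : ℕ) (hDN : D ⊔ N = K)
    (hDL : D ≤ upperL G j ⊔ N) (hDM : ¬ D ≤ upperM G j ⊔ N) :
    ∀ x ∈ upperL G j ⊔ N,
      ⁅D, D.map (MulAut.conj x⁻¹).toMonoidHom⁆ ⊔ N ⊔ upperM G j = K ⊔ upperM G j :=
  commutator_conj_sup_eq_general G N K D hN hsub hsimple j hDN hDL hDM
end
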